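/- If T is a bounded linear operator on a complex Hilbert space and Re(T) is unitarily equivalent to a scalar multiple of the identity, then w(T) = √(‖Re(T)‖² + ‖Im(T)‖²). -/

import Mathlib

open Complex

variable {H : Type*} [NormedAddCommGroup H] [InnerProductSpace ℂ H] [CompleteSpace H]

/-- The numerical radius `w(T) = sup {|⟨Tx,x⟩| : ‖x‖ = 1}`. -/
noncomputable def numRadius (T : H →L[ℂ] H) : ℝ :=
  sSup {r : ℝ | ∃ x : H, ‖x‖ = 1 ∧ r = ‖(inner ℂ (T x) x : ℂ)‖}

/-- The Crawford number `m(T) = inf {|⟨Tx,x⟩| : ‖x‖ = 1}`. -/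
noncomputable def crawford (T : H →L[ℂ] H) : ℝ :=
  sInf {r : ℝ | ∃ x : H, ‖x‖ = 1 ∧ r = ‖(inner ℂ (T x) x : ℂ)‖}

/-- The real part `Re(T) = (T + T*)/2`. -/
noncomputable def reOp (T : H →L[ℂ] H) : H →L[ℂ] H := (2 : ℂ)⁻¹ • (T + star T)

/-- The imaginary part `Im(T) = (T - T*)/(2i)`. -/
noncomputable def imOp (T : H →L[ℂ] H) : H →L[ℂ] H := (2 * Complex.I)⁻¹ • (T - star T)

/-! Since `Re T = λ • 1`, for a unit vector `x` the number `⟪T x, x⟫` has real part `λ` and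
imaginary part `-⟪Im T x, x⟫`, so `|⟪T x, x⟫| = √(λ² + |⟪Im T x, x⟫|²)`. The supremum over the
unit sphere commutes with the increasing continuous map `t ↦ √(λ² + t²)`, giving
`w(T) = √(λ² + w(Im T)²)`, and `w(Im T) = ‖Im T‖` because `Im T` is self-adjoint. -/

theorem eq_smul_one_of_star_mul_mul_eq_smul_one {K R : Type*} [CommSemiring K] [Semiring R]
    [StarMul R] [Algebra K R] {U A : R} (hU : U ∈ unitary R) {c : K}
    (h : star U * A * U = c • 1) : A = c • 1 := by
  have hUU : U * star U = 1 := Unitary.mul_star_self_of_mem hU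
  calc A = (U * star U) * A * (U * star U) := by rw [hUU, one_mul, mul_one]
    _ = U * (star U * A * U) * star U := by simp only [mul_assoc]
    _ = c • 1 := by rw [h, mul_smul_one, smul_mul_assoc, hUU]

open Metric

local notation "⟪" x ", " y "⟫" => inner ℂ x y

section NumRadius

variable {E : Type*} [NormedAddCommGroup E] [InnerProductSpace ℂ E] (T : E →L[ℂ] E)

theorem numRadius_eq_sSup_image : numRadius T = sSup ((fun x ↦ ‖⟪T x, x⟫‖) '' sphere 0 1) := by
  simp only [numRadius, Set.image, mem_sphere_zero_iff_norm, eq_comm]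

theorem norm_inner_apply_self_le (x : E) : ‖⟪T x, x⟫‖ ≤ ‖T‖ * ‖x‖ ^ 2 :=
  calc ‖⟪T x, x⟫‖ ≤ ‖T x‖ * ‖x‖ := norm_inner_le_norm _ _
    _ ≤ ‖T‖ * ‖x‖ * ‖x‖ := by gcongr; exact T.le_opNorm x
    _ = ‖T‖ * ‖x‖ ^ 2 := by ring

theorem bddAbove_norm_inner_apply_self_sphere :
    BddAbove ((fun x ↦ ‖⟪T x, x⟫‖) '' sphere (0 : E) 1) := by
  refine ⟨‖T‖, ?_⟩
  rintro _ ⟨x, hx, rfl⟩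
  simpa [mem_sphere_zero_iff_norm.mp hx] using norm_inner_apply_self_le T x

theorem numRadius_nonneg : 0 ≤ numRadius T :=
  Real.sSup_nonneg fun _ ⟨_, _, hr⟩ ↦ hr ▸ norm_nonneg _

theorem numRadius_le_opNorm : numRadius T ≤ ‖T‖ := by
  rw [numRadius_eq_sSup_image]
  refine Real.sSup_le ?_ (norm_nonneg T)
  rintro _ ⟨x, hx, rfl⟩
  simpa [mem_sphere_zero_iff_norm.mp hx] using norm_inner_apply_self_le T x

theorem norm_inner_apply_self_le_numRadius (x : E) : ‖⟪T x, x⟫‖ ≤ numRadius T * ‖x‖ ^ 2 := by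
  rcases eq_or_ne x 0 with rfl | hx
  · simp
  have hx' : (‖x‖ : ℂ) ≠ 0 := by exact_mod_cast norm_ne_zero_iff.mpr hx
  set u := (‖x‖ : ℂ)⁻¹ • x
  have hu : u ∈ sphere (0 : E) 1 := by
    simp [u, norm_smul, norm_ne_zero_iff.mpr hx]
  have hxu : x = (‖x‖ : ℂ) • u := by simp [u, smul_smul, hx']
  have hinner : ‖⟪T x, x⟫‖ = ‖⟪T u, u⟫‖ * ‖x‖ ^ 2 := by
    rw [hxu, map_smul, inner_smul_left, inner_smul_right, norm_mul, norm_mul]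
    simp only [Complex.norm_conj, Complex.norm_real, norm_norm, ← hxu]
    ring
  rw [hinner]
  gcongr
  rw [numRadius_eq_sSup_image]
  exact le_csSup (bddAbove_norm_inner_apply_self_sphere T) ⟨u, hu, rfl⟩

theorem IsSelfAdjoint.numRadius_eq_opNorm [CompleteSpace E] {A : E →L[ℂ] E}
    (hA : IsSelfAdjoint A) : numRadius A = ‖A‖ := by
  refine le_antisymm (numRadius_le_opNorm A) ?_
  rw [A.norm_eq_iSup_rayleighQuotient hA.isSymmetric]
  refine ciSup_le fun x ↦ ?_
  rcases eq_or_ne x 0 with rfl | hx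
  · simpa using numRadius_nonneg A
  have hx2 : 0 < ‖x‖ ^ 2 := by positivity
  rw [ContinuousLinearMap.rayleighQuotient, ContinuousLinearMap.reApplyInnerSelf_apply,
    abs_div, abs_sq, div_le_iff₀ hx2]
  exact (RCLike.abs_re_le_norm _).trans (norm_inner_apply_self_le_numRadius A x)

theorem numRadius_eq_of_norm_inner_apply_self_eq [Nontrivial E] {S : E →L[ℂ] E} {g : ℝ → ℝ}
    (hg : Continuous g) (hmono : MonotoneOn g (Set.Ici 0))
    (h : ∀ x : E, ‖x‖ = 1 → ‖⟪T x, x⟫‖ = g ‖⟪S x, x⟫‖) :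
    numRadius T = g (numRadius S) := by
  have himage : (fun x ↦ ‖⟪T x, x⟫‖) '' sphere (0 : E) 1 =
      g '' ((fun x ↦ ‖⟪S x, x⟫‖) '' sphere (0 : E) 1) := by
    rw [Set.image_image]
    exact Set.image_congr fun x hx ↦ h x (mem_sphere_zero_iff_norm.mp hx)
  have hne : ((fun x ↦ ‖⟪S x, x⟫‖) '' sphere (0 : E) 1).Nonempty :=
    (NormedSpace.sphere_nonempty.mpr zero_le_one).image _
  have hnonneg : (fun x ↦ ‖⟪S x, x⟫‖) '' sphere (0 : E) 1 ⊆ Set.Ici 0 := by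
    rintro _ ⟨y, -, rfl⟩
    exact norm_nonneg _
  rw [numRadius_eq_sSup_image, himage, numRadius_eq_sSup_image]
  exact (MonotoneOn.map_csSup_of_continuousWithinAt hg.continuousWithinAt (hmono.mono hnonneg)
    hne (bddAbove_norm_inner_apply_self_sphere S)).symm

end NumRadius

section ReIm

variable (T : H →L[ℂ] H)

theorem inner_reOp_apply_self (x : H) : ⟪reOp T x, x⟫ = (⟪T x, x⟫.re : ℂ) := by
  rw [reOp, smul_apply, inner_smul_left, add_apply,
    inner_add_left, ContinuousLinearMap.star_eq_adjoint, ContinuousLinearMap.adjoint_inner_left,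
    ← inner_conj_symm x (T x), Complex.add_conj, map_inv₀, map_ofNat]
  push_cast
  ring

theorem inner_imOp_apply_self (x : H) : ⟪imOp T x, x⟫ = -(⟪T x, x⟫.im : ℂ) := by
  rw [imOp, smul_apply, inner_smul_left, sub_apply,
    inner_sub_left, ContinuousLinearMap.star_eq_adjoint, ContinuousLinearMap.adjoint_inner_left,
    ← inner_conj_symm x (T x), Complex.sub_conj, map_inv₀, map_mul, map_ofNat, Complex.conj_I]
  field_simp
  simp

theorem norm_inner_apply_self_eq_sqrt (x : H) :
    ‖⟪T x, x⟫‖ = √(‖⟪reOp T x, x⟫‖ ^ 2 + ‖⟪imOp T x, x⟫‖ ^ 2) := by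
  rw [inner_reOp_apply_self, inner_imOp_apply_self, norm_neg, Complex.norm_real, Complex.norm_real,
    Real.norm_eq_abs, Real.norm_eq_abs, sq_abs, sq_abs, Complex.norm_eq_sqrt_sq_add_sq]

theorem isSelfAdjoint_imOp : IsSelfAdjoint (imOp T) := by
  rw [IsSelfAdjoint, imOp, star_smul, star_sub, star_star, ← neg_sub, smul_neg, ← neg_smul]
  congr 1
  simp

end ReIm

theorem stmt12 (T : H →L[ℂ] H)
    (h : ∃ U ∈ unitary (H →L[ℂ] H), ∃ lam : ℝ,
      star U * reOp T * U = (lam : ℂ) • (1 : H →L[ℂ] H)) :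
    numRadius T = Real.sqrt (‖reOp T‖ ^ 2 + ‖imOp T‖ ^ 2) := by
  obtain ⟨U, hU, lam, hconj⟩ := h
  have hRe : reOp T = (lam : ℂ) • 1 := eq_smul_one_of_star_mul_mul_eq_smul_one hU hconj
  rcases subsingleton_or_nontrivial H with _ | _
  · simp [numRadius_eq_sSup_image, sphere_eq_empty_of_subsingleton one_ne_zero,
      Subsingleton.elim (reOp T) 0, Subsingleton.elim (imOp T) 0]
  have hReInner (x : H) (hx : ‖x‖ = 1) : ‖⟪reOp T x, x⟫‖ = ‖reOp T‖ := by
    simp [hRe, norm_smul, hx]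
  have hmono : MonotoneOn (fun t ↦ √(‖reOp T‖ ^ 2 + t ^ 2)) (Set.Ici 0) := fun s hs t _ hst ↦
    Real.sqrt_le_sqrt (by gcongr)
  rw [numRadius_eq_of_norm_inner_apply_self_eq T (S := imOp T) (by fun_prop) hmono fun x hx ↦ by
    rw [norm_inner_apply_self_eq_sqrt, hReInner x hx], (isSelfAdjoint_imOp T).numRadius_eq_opNorm]
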